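/- arXiv:2603.02769 — 2 statements merged into one kernel-verified Lean document; each statement's English description precedes it below -/
import Mathlib

section
/- Let (X,d) be a metric space, let m ≥ 3 be an integer, and let K ⊆ X be a compact subset whose Hausdorff dimension satisfies dim_H(K) < (m-2)/2. Then there exists a finite Borel measure ν on X supported in K (i.e. ν(X \ K) = 0) such that the Wolff potential of ν diverges at every point of K: 𝒲^ν(x) = +∞ for every x ∈ K. -/
/-!
Put `s = (m - 2) / 2`. Since `dimH K < s`, `μH[s] K = 0`, so for every `ε > 0` the set `K` is
covered by balls `B(yₙ, rₙ)` centred in `K` with `∑ rₙ ^ s ≤ ε`; the measure `∑ rₙ ^ s • δ_{yₙ}` has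
mass at most `ε` and gives mass at least `r ^ s` to some ball `B(x, r)` around each `x ∈ K`.
Summing these measures over `ε = 2⁻ʲ` gives a finite measure `ν` on `K` such that every `x ∈ K` has
arbitrarily small radii `ρ` with `ν(B(x, ρ)) ≥ ρ ^ s`. For `r ∈ (ρ, 2ρ]` the Wolff integrand is then
at least `ρ / r² ≥ 1 / (4ρ)`, so each such scale contributes at least `1/4` to the integral, which
is incompatible with a finite integral, whose tails `∫_{(0, t]}` tend to `0`.
-/

open Metric MeasureTheory
open scoped ENNReal

/-- The Wolff potential `𝒲^ν(x) = ∫₀¹ (ν(B_r(x)) · r^{2-m})^{2/(m-2)} dr` of a measure `ν`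
on a metric space at a point `x`. -/
noncomputable def wolffPotential {X : Type*} [MetricSpace X] [MeasurableSpace X]
    (m : ℕ) (ν : Measure X) (x : X) : ℝ≥0∞ :=
  ∫⁻ r in Set.Ioc (0 : ℝ) 1,
    (ν (closedBall x r) * ENNReal.ofReal (r ^ ((2 : ℝ) - (m : ℝ)))) ^ ((2 : ℝ) / ((m : ℝ) - 2))

open Filter Topology Set

lemma tendsto_setLIntegral_Ioc_nhdsGT {μ : Measure ℝ} {f : ℝ → ℝ≥0∞} {a b : ℝ} (hab : a < b)
    (hf : ∫⁻ r in Ioc a b, f r ∂μ ≠ ∞) :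
    Tendsto (fun t => ∫⁻ r in Ioc a t, f r ∂μ) (𝓝[>] a) (𝓝 0) := by
  have hempty : ⋂ t > a, Ioc a t = ∅ := by
    refine eq_empty_of_forall_notMem fun r hr => ?_
    have har : a < r := (mem_iInter₂.1 hr b hab).1
    have := (mem_iInter₂.1 hr ((a + r) / 2) (by linarith)).2
    linarith
  have key := tendsto_measure_biInter_gt (μ := μ.withDensity f) (s := Ioc a) (a := a)
    (fun _ _ => measurableSet_Ioc.nullMeasurableSet)
    (fun _ _ _ hij => Ioc_subset_Ioc_right hij)
    ⟨b, hab, by rwa [withDensity_apply _ measurableSet_Ioc]⟩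
  rw [hempty, measure_empty] at key
  exact key.congr fun t => withDensity_apply _ measurableSet_Ioc

lemma ofReal_div_sq_le_rpow {m : ℝ} (hm : 2 < m) {ρ r : ℝ} (hρ : 0 < ρ) (hr : 0 < r) {a : ℝ≥0∞}
    (ha : ENNReal.ofReal (ρ ^ ((m - 2) / 2)) ≤ a) :
    ENNReal.ofReal (ρ / r ^ 2) ≤ (a * ENNReal.ofReal (r ^ (2 - m))) ^ (2 / (m - 2)) := by
  have hm2 : m - 2 ≠ 0 := by linarith
  calc ENNReal.ofReal (ρ / r ^ 2)
      = ENNReal.ofReal (ρ ^ ((m - 2) / 2) * r ^ (2 - m)) ^ (2 / (m - 2)) := by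
        rw [ENNReal.ofReal_rpow_of_pos (by positivity),
          Real.mul_rpow (by positivity) (by positivity), ← Real.rpow_mul hρ.le,
          ← Real.rpow_mul hr.le]
        have hsp : (m - 2) / 2 * (2 / (m - 2)) = 1 := by field_simp
        have hq : (2 - m) * (2 / (m - 2)) = -2 := by field_simp; ring
        rw [hsp, hq, Real.rpow_one, Real.rpow_neg hr.le, div_eq_mul_inv]
        norm_cast
    _ ≤ (a * ENNReal.ofReal (r ^ (2 - m))) ^ (2 / (m - 2)) := by
        rw [ENNReal.ofReal_mul (by positivity)]
        gcongr

lemma ofReal_quarter_le_setLIntegral_Ioc {X : Type*} [MetricSpace X] [MeasurableSpace X] {m : ℝ}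
    (hm : 2 < m) {ν : Measure X} {x : X} {ρ : ℝ} (hρ : 0 < ρ)
    (hball : ENNReal.ofReal (ρ ^ ((m - 2) / 2)) ≤ ν (closedBall x ρ)) :
    ENNReal.ofReal (1 / 4) ≤ ∫⁻ r in Ioc ρ (2 * ρ),
      (ν (closedBall x r) * ENNReal.ofReal (r ^ (2 - m))) ^ (2 / (m - 2)) := by
  calc ENNReal.ofReal (1 / 4) = ∫⁻ _ in Ioc ρ (2 * ρ), ENNReal.ofReal (1 / (4 * ρ)) := by
        rw [setLIntegral_const, Real.volume_Ioc, ← ENNReal.ofReal_mul (by positivity)]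
        congr 1
        field_simp
        ring
    _ ≤ _ := by
        refine setLIntegral_mono' measurableSet_Ioc fun r hr => ?_
        have hr0 : 0 < r := hρ.trans hr.1
        refine le_trans ?_ (ofReal_div_sq_le_rpow hm hρ hr0
          (hball.trans (measure_mono (closedBall_subset_closedBall hr.1.le))))
        apply ENNReal.ofReal_le_ofReal
        rw [div_le_div_iff₀ (by positivity) (by positivity)]
        nlinarith [hr.2]

theorem wolffPotential_eq_top_of_frequently {X : Type*} [MetricSpace X] [MeasurableSpace X]
    {m : ℕ} (hm : 2 < m) {ν : Measure X} {x : X}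
    (h : ∃ᶠ ρ in 𝓝[>] 0, ENNReal.ofReal (ρ ^ (((m : ℝ) - 2) / 2)) ≤ ν (closedBall x ρ)) :
    wolffPotential m ν x = ∞ := by
  by_contra hW
  have htwice : Tendsto (fun ρ : ℝ => 2 * ρ) (𝓝[>] 0) (𝓝[>] 0) := by
    refine tendsto_nhdsWithin_of_tendsto_nhds_of_eventually_within _
      (((continuous_const_mul 2).tendsto' 0 0 (mul_zero 2)).mono_left nhdsWithin_le_nhds) ?_
    filter_upwards [self_mem_nhdsWithin] with ρ (hρ : 0 < ρ) using mul_pos two_pos hρ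
  have hsmall := ((tendsto_setLIntegral_Ioc_nhdsGT one_pos hW).comp htwice).eventually
    (gt_mem_nhds (ENNReal.ofReal_pos.2 (by norm_num : (0 : ℝ) < 1 / 4)))
  obtain ⟨ρ, hball, hlt, hρ⟩ := (h.and_eventually (hsmall.and self_mem_nhdsWithin)).exists
  exact ((ofReal_quarter_le_setLIntegral_Ioc (by exact_mod_cast hm) hρ hball).trans
    (lintegral_mono_set (Ioc_subset_Ioc_left hρ.le))).not_gt hlt

lemma exists_cover_subset_tsum_ediam_rpow_lt {X : Type*} [EMetricSpace X] [MeasurableSpace X]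
    [BorelSpace X] {s : ℝ} (hs : 0 < s) {K : Set X} (hK : μH[s] K = 0) {ε : ℝ≥0∞} (hε : 0 < ε) :
    ∃ t : ℕ → Set X, (∀ n, t n ⊆ K) ∧ K ⊆ ⋃ n, t n ∧ ∑' n, ediam (t n) ^ s < ε := by
  -- the infimum at scale `⊤` in `hausdorffMeasure_apply`, i.e. over covers of any diameter
  have hcover : (⨅ (t : ℕ → Set X) (_ : K ⊆ ⋃ n, t n) (_ : ∀ n, ediam (t n) ≤ ⊤),
      ∑' n, ⨆ _ : (t n).Nonempty, ediam (t n) ^ s) < ε := by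
    refine lt_of_le_of_lt ?_ (hK ▸ hε)
    rw [Measure.hausdorffMeasure_apply]
    exact le_iSup₂ (f := fun (r : ℝ≥0∞) (_ : 0 < r) =>
      ⨅ (t : ℕ → Set X) (_ : K ⊆ ⋃ n, t n) (_ : ∀ n, ediam (t n) ≤ r),
        ∑' n, ⨆ _ : (t n).Nonempty, ediam (t n) ^ s) ⊤ ENNReal.zero_lt_top
  simp only [iInf_lt_iff] at hcover
  obtain ⟨t, htK, -, hsum⟩ := hcover
  refine ⟨fun n => t n ∩ K, fun n => inter_subset_right, fun x hx => ?_,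
    lt_of_le_of_lt (ENNReal.tsum_le_tsum fun n => ?_) hsum⟩
  · obtain ⟨n, hn⟩ := mem_iUnion.1 (htK hx)
    exact mem_iUnion.2 ⟨n, hn, hx⟩
  · rcases (t n ∩ K).eq_empty_or_nonempty with h | h
    · simp [h, hs]
    · rw [iSup_pos (h.mono inter_subset_left)]
      gcongr
      exact inter_subset_left

lemma exists_measure_univ_le_rpow_le_measure_closedBall {X : Type*} [MetricSpace X]
    [MeasurableSpace X] [BorelSpace X] {s : ℝ} (hs : 0 < s) {K : Set X} (hK : μH[s] K = 0)
    {ε : ℝ≥0∞} (hε : 0 < ε) :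
    ∃ μ : Measure X, μ univ ≤ ε ∧ μ Kᶜ = 0 ∧
      ∀ x ∈ K, ∃ r > 0, ENNReal.ofReal (r ^ s) ≤ μ (closedBall x r) := by
  rcases K.eq_empty_or_nonempty with rfl | ⟨x₀, hx₀⟩
  · exact ⟨0, by simp, rfl, by simp⟩
  obtain ⟨t, htK, hKt, hsum⟩ :=
    exists_cover_subset_tsum_ediam_rpow_lt hs hK (ENNReal.half_pos hε.ne')
  obtain ⟨η, hη, hηsum⟩ := ENNReal.exists_pos_sum_of_countable (ENNReal.half_pos hε.ne').ne' ℕ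
  classical
  set y : ℕ → X := fun n => if h : (t n).Nonempty then h.some else x₀
  -- `η` keeps the radii positive where `t n` is a single point
  set r : ℕ → ℝ := fun n => max (diam (t n)) ((η n : ℝ) ^ s⁻¹)
  have hyK (n : ℕ) : y n ∈ K := by
    by_cases h : (t n).Nonempty
    · simpa [y, h] using htK n h.some_mem
    · simpa [y, h] using hx₀
  have hr (n : ℕ) : 0 < r n := lt_max_of_lt_right (by have := hη n; positivity)
  have hmass (n : ℕ) : ENNReal.ofReal (r n ^ s) ≤ ediam (t n) ^ s + η n := by
    rcases le_total (diam (t n)) ((η n : ℝ) ^ s⁻¹) with h | h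
    · rw [show r n = _ from max_eq_right h, Real.rpow_inv_rpow (η n).coe_nonneg hs.ne',
        ENNReal.ofReal_coe_nnreal]
      exact le_add_self
    · rw [show r n = _ from max_eq_left h, ← ENNReal.ofReal_rpow_of_nonneg diam_nonneg hs.le]
      exact le_add_right (ENNReal.rpow_le_rpow ENNReal.ofReal_toReal_le hs.le)
  refine ⟨Measure.sum fun n => ENNReal.ofReal (r n ^ s) • Measure.dirac (y n), ?_, ?_,
    fun x hx => ?_⟩
  · simp only [Measure.sum_apply_of_countable, Measure.smul_apply, smul_eq_mul,
      measure_univ, mul_one]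
    calc ∑' n, ENNReal.ofReal (r n ^ s) ≤ ∑' n, (ediam (t n) ^ s + η n) :=
          ENNReal.tsum_le_tsum hmass
      _ = ∑' n, ediam (t n) ^ s + ∑' n, (η n : ℝ≥0∞) := ENNReal.tsum_add
      _ ≤ ε / 2 + ε / 2 := add_le_add hsum.le hηsum.le
      _ = ε := ENNReal.add_halves ε
  · simp [Measure.sum_apply_of_countable, Measure.dirac_apply, hyK]
  · obtain ⟨n, hn⟩ := mem_iUnion.1 (hKt hx)
    have hyn : y n ∈ t n := by
      simpa [y, show (t n).Nonempty from ⟨x, hn⟩] using Nonempty.some_mem _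
    refine ⟨r n, hr n, ?_⟩
    calc ENNReal.ofReal (r n ^ s)
        = (ENNReal.ofReal (r n ^ s) • Measure.dirac (y n)) (closedBall x (r n)) := by
          have hfin : ediam (t n) ≠ ∞ := fun h => by
            have := (ENNReal.le_tsum n).trans_lt hsum
            rw [h, ENNReal.top_rpow_of_pos hs] at this
            exact not_top_lt this
          rw [Measure.smul_apply, Measure.dirac_apply_of_mem, smul_eq_mul, mul_one]
          rw [mem_closedBall, dist_comm]
          exact (dist_le_diam_of_mem' hfin hn hyn).trans (le_max_left _ _)
      _ ≤ _ := by
          rw [Measure.sum_apply_of_countable]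
          exact ENNReal.le_tsum (f := fun i =>
            (ENNReal.ofReal (r i ^ s) • Measure.dirac (y i)) (closedBall x (r n))) n

lemma exists_isFiniteMeasure_frequently_rpow_le_measure_closedBall {X : Type*} [MetricSpace X]
    [MeasurableSpace X] [BorelSpace X] {s : ℝ} (hs : 0 < s) {K : Set X} (hK : μH[s] K = 0) :
    ∃ ν : Measure X, IsFiniteMeasure ν ∧ ν Kᶜ = 0 ∧
      ∀ x ∈ K, ∃ᶠ r in 𝓝[>] 0, ENNReal.ofReal (r ^ s) ≤ ν (closedBall x r) := by
  choose μ hμ hμK hμx using fun j : ℕ =>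
    exists_measure_univ_le_rpow_le_measure_closedBall hs hK
      (ENNReal.pow_pos (ENNReal.inv_pos.2 ENNReal.ofNat_ne_top) j : (0 : ℝ≥0∞) < 2⁻¹ ^ j)
  refine ⟨Measure.sum μ, ⟨?_⟩, by simp [Measure.sum_apply_of_countable, hμK], fun x hx => ?_⟩
  · calc Measure.sum μ univ = ∑' j, μ j univ := Measure.sum_apply_of_countable _ _
      _ ≤ ∑' j : ℕ, 2⁻¹ ^ j := ENNReal.tsum_le_tsum hμ
      _ < ∞ := by simp [ENNReal.tsum_geometric, ENNReal.one_sub_inv_two]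
  rw [(nhdsGT_basis 0).frequently_iff]
  intro δ hδ
  obtain ⟨j, hj⟩ :=
    ENNReal.exists_inv_two_pow_lt (ENNReal.ofReal_pos.2 (Real.rpow_pos_of_pos hδ s)).ne'
  obtain ⟨r, hr, hball⟩ := hμx j x hx
  have hrδ : r ^ s < δ ^ s := (ENNReal.ofReal_lt_ofReal_iff (by positivity)).1 <|
    (hball.trans (measure_mono (subset_univ _))).trans_lt ((hμ j).trans_lt hj)
  exact ⟨r, ⟨hr, (Real.rpow_lt_rpow_iff hr.le hδ.le hs).1 hrδ⟩,
    hball.trans (Measure.le_iff'.1 (Measure.le_sum μ j) _)⟩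

lemma hausdorffMeasure_eq_zero_of_dimH_lt_ofReal {X : Type*} [EMetricSpace X] [MeasurableSpace X]
    [BorelSpace X] {K : Set X} {d : ℝ} (h : dimH K < ENNReal.ofReal d) : μH[d] K = 0 := by
  have hd : 0 ≤ d := (ENNReal.ofReal_pos.1 (pos_of_gt h)).le
  simpa [Real.coe_toNNReal d hd] using hausdorffMeasure_of_dimH_lt (d := d.toNNReal) h

theorem exists_measure_wolffPotential_eq_top_of_dimH_lt_general
    {X : Type*} [MetricSpace X] [MeasurableSpace X] [BorelSpace X]
    (m : ℕ) (hm : 3 ≤ m) (K : Set X)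
    (hdim : dimH K < ((m : ℝ≥0∞) - 2) / 2) :
    ∃ ν : Measure X, IsFiniteMeasure ν ∧ ν Kᶜ = 0 ∧
      ∀ x ∈ K, wolffPotential m ν x = ⊤ := by
  have hs : 0 < ((m : ℝ) - 2) / 2 := by
    have : (3 : ℝ) ≤ m := by exact_mod_cast hm
    linarith
  have hdim' : ((m : ℝ≥0∞) - 2) / 2 = ENNReal.ofReal (((m : ℝ) - 2) / 2) := by
    rw [ENNReal.ofReal_div_of_pos two_pos, ENNReal.ofReal_sub _ zero_le_two,
      ENNReal.ofReal_natCast]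
    norm_num
  obtain ⟨ν, hνfin, hνK, hν⟩ := exists_isFiniteMeasure_frequently_rpow_le_measure_closedBall hs
    (hausdorffMeasure_eq_zero_of_dimH_lt_ofReal (hdim' ▸ hdim))
  exact ⟨ν, hνfin, hνK, fun x hx => wolffPotential_eq_top_of_frequently (by omega) (hν x hx)⟩

/-- If `K` is a compact subset of a metric space with Hausdorff dimension
`dim_H K < (m-2)/2` (`m ≥ 3` an integer), then there is a finite Borel measure `ν`
supported in `K` whose Wolff potential diverges at every point of `K`. -/
theorem exists_measure_wolffPotential_eq_top_of_dimH_lt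
    {X : Type*} [MetricSpace X] [MeasurableSpace X] [BorelSpace X]
    (m : ℕ) (hm : 3 ≤ m) (K : Set X) (hK : IsCompact K)
    (hdim : dimH K < ((m : ℝ≥0∞) - 2) / 2) :
    ∃ ν : Measure X, IsFiniteMeasure ν ∧ ν Kᶜ = 0 ∧
      ∀ x ∈ K, wolffPotential m ν x = ⊤ :=
  exists_measure_wolffPotential_eq_top_of_dimH_lt_general m hm K hdim
end

section
/- Let (X,d) be a metric space, let m ≥ 3 be an integer, let 0 < s < (m-2)/2, and let K ⊆ X be a set. Suppose that for every integer l ≥ 1 there is a countable family of points x_{l,j} ∈ K and radii r_{l,j} with 0 < r_{l,j} ≤ 2^{-l}, such that K ⊆ ⋃_j B_{r_{l,j}}(x_{l,j}) and Σ_j r_{l,j}^s ≤ 1. Define the atomic measure ν := Σ_{l≥1} Σ_j r_{l,j}^{(m-2)/2} · δ_{x_{l,j}}, where δ_p denotes the Dirac measure at p. Then: (1) ν is a finite measure, with total mass ν(X) ≤ Σ_{l≥1} 2^{-l τ} < ∞ where τ := (m-2)/2 − s > 0; and (2) the Wolff potential of ν diverges at every point of K: 𝒲^ν(x) = +∞ for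 every x ∈ K. -/
/-!
Since `r^{(m-2)/2} = r^τ r^s ≤ 2^{-lτ} r^s` for `r ≤ 2^{-l}`, the atoms of level `l` carry mass
at most `2^{-lτ}`, a geometric series. For `p ∈ K`, the covers give arbitrarily small radii `ρ`
with `ν(B_ρ(p)) ≥ ρ^{(m-2)/2}`; on `(ρ, 2ρ]` the Wolff integrand is then at least `1/(4ρ)`, so
each such interval adds `1/4` to the integral, and infinitely many disjoint ones make it diverge.
-/

open Metric MeasureTheory
open scoped ENNReal

open Set Topology

lemma rpow_add_le_mul_rpow {r δ τ s : ℝ} (hr : 0 < r) (hrδ : r ≤ δ) (hτ : 0 ≤ τ) :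
    r ^ (τ + s) ≤ δ ^ τ * r ^ s := by
  rw [Real.rpow_add hr]
  exact mul_le_mul_of_nonneg_right (Real.rpow_le_rpow hr.le hrδ hτ) (Real.rpow_nonneg hr.le s)

lemma tsum_ofReal_rpow_add_le {ι : Type*} {r : ι → ℝ} {δ τ s : ℝ} (hr : ∀ j, 0 < r j)
    (hrδ : ∀ j, r j ≤ δ) (hτ : 0 ≤ τ) (hsum : ∑' j, ENNReal.ofReal (r j ^ s) ≤ 1) :
    ∑' j, ENNReal.ofReal (r j ^ (τ + s)) ≤ ENNReal.ofReal (δ ^ τ) :=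
  calc ∑' j, ENNReal.ofReal (r j ^ (τ + s))
      ≤ ∑' j, ENNReal.ofReal (δ ^ τ) * ENNReal.ofReal (r j ^ s) :=
        ENNReal.tsum_le_tsum fun j => by
          rw [← ENNReal.ofReal_mul' (Real.rpow_nonneg (hr j).le s)]
          exact ENNReal.ofReal_le_ofReal (rpow_add_le_mul_rpow (hr j) (hrδ j) hτ)
    _ = ENNReal.ofReal (δ ^ τ) * ∑' j, ENNReal.ofReal (r j ^ s) := ENNReal.tsum_mul_left
    _ ≤ ENNReal.ofReal (δ ^ τ) := mul_le_of_le_one_right' hsum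

lemma tsum_ofReal_two_rpow_neg_mul_lt_top {τ : ℝ} (hτ : 0 < τ) :
    ∑' l : ℕ, ENNReal.ofReal ((2 : ℝ) ^ (-(l : ℝ) * τ)) < ⊤ := by
  have hpow : ∀ l : ℕ, ENNReal.ofReal ((2 : ℝ) ^ (-(l : ℝ) * τ)) =
      ENNReal.ofReal ((2 : ℝ) ^ (-τ)) ^ l := fun l => by
    rw [← ENNReal.ofReal_pow (by positivity), ← Real.rpow_natCast, ← Real.rpow_mul zero_le_two,
      neg_mul_comm, mul_comm]
  simp_rw [hpow]
  exact tsum_geometric_lt_top.2 <|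
    ENNReal.ofReal_lt_one.2 <| Real.rpow_lt_one_of_one_lt_of_neg one_lt_two (neg_neg_of_pos hτ)

lemma exists_two_rpow_neg_lt {a : ℝ} (ha : 0 < a) : ∃ l : ℕ, 1 ≤ l ∧ (2 : ℝ) ^ (-(l : ℝ)) < a := by
  obtain ⟨n, hn⟩ := exists_pow_lt_of_lt_one ha (by norm_num : (2 : ℝ)⁻¹ < 1)
  refine ⟨n + 1, Nat.le_add_left 1 n, lt_of_le_of_lt ?_ hn⟩
  rw [Real.rpow_neg zero_le_two, Real.rpow_natCast, ← inv_pow]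
  exact pow_le_pow_of_le_one (by norm_num) (by norm_num) n.le_succ

section Dirac

variable {ι X : Type*} [MeasurableSpace X] (w : ι → ℝ≥0∞) (x : ι → X)

lemma sum_smul_dirac_apply_univ :
    (Measure.sum fun i => w i • Measure.dirac (x i)) univ = ∑' i, w i := by
  simp [Measure.sum_apply _ MeasurableSet.univ]

lemma le_sum_smul_dirac_apply {s : Set X} {i : ι} (hi : x i ∈ s) :
    w i ≤ (Measure.sum fun i => w i • Measure.dirac (x i)) s :=
  calc w i = (w i • Measure.dirac (x i)) s := by simp [Measure.dirac_apply_of_mem hi]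
    _ ≤ _ := Measure.le_sum (fun i => w i • Measure.dirac (x i)) i s

end Dirac

lemma setLIntegral_Ioc_zero_eq_top {f : ℝ → ℝ≥0∞} {ε : ℝ≥0∞} (hε : ε ≠ 0)
    (h : ∀ a, 0 < a → ∃ b ∈ Ioo 0 a, ε ≤ ∫⁻ t in Ioc b a, f t) {a : ℝ} (ha : 0 < a) :
    ∫⁻ t in Ioc 0 a, f t = ⊤ := by
  have hmul : ∀ n : ℕ, ∀ a, 0 < a → n * ε ≤ ∫⁻ t in Ioc 0 a, f t := by
    intro n
    induction n with
    | zero => simp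
    | succ n ih =>
      intro a ha
      obtain ⟨b, hb, hεb⟩ := h a ha
      calc ((n + 1 : ℕ) : ℝ≥0∞) * ε = n * ε + ε := by push_cast; ring
        _ ≤ (∫⁻ t in Ioc 0 b, f t) + ∫⁻ t in Ioc b a, f t := add_le_add (ih b hb.1) hεb
        _ = ∫⁻ t in Ioc 0 a, f t := by
          rw [← lintegral_union measurableSet_Ioc (Ioc_disjoint_Ioc_of_le le_rfl),
            Ioc_union_Ioc_eq_Ioc hb.1.le hb.2.le]
  by_contra hfin
  obtain ⟨n, hn⟩ := ENNReal.exists_nat_mul_gt hε hfin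
  exact (hmul n a ha).not_gt hn

lemma rpow_mul_rpow_two_sub_rpow_eq {m ρ : ℝ} (hm : 2 < m) (hρ : 0 < ρ) :
    (ρ ^ ((m - 2) / 2) * (2 * ρ) ^ (2 - m)) ^ (2 / (m - 2)) = (4 * ρ)⁻¹ := by
  have hm' : m - 2 ≠ 0 := by linarith
  rw [Real.mul_rpow (by positivity) (by positivity), ← Real.rpow_mul hρ.le,
    ← Real.rpow_mul (by positivity), show (m - 2) / 2 * (2 / (m - 2)) = 1 by field_simp,
    show (2 - m) * (2 / (m - 2)) = -2 by field_simp; ring, Real.rpow_one,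
    Real.rpow_neg (by positivity), Real.rpow_two]
  field_simp
  ring

section Wolff

variable {X : Type*} [MetricSpace X] [MeasurableSpace X] {m : ℕ} {ν : Measure X} {p : X}

lemma inv_four_mul_le_wolff_integrand (hm : 2 < m) {ρ t : ℝ} (hρ : 0 < ρ) (ht : t ∈ Ioc ρ (2 * ρ))
    (hν : ENNReal.ofReal (ρ ^ (((m : ℝ) - 2) / 2)) ≤ ν (closedBall p ρ)) :
    ENNReal.ofReal (4 * ρ)⁻¹ ≤
      (ν (closedBall p t) * ENNReal.ofReal (t ^ ((2 : ℝ) - m))) ^ ((2 : ℝ) / (m - 2)) := by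
  have hm' : (2 : ℝ) < m := by exact_mod_cast hm
  have hexp : (0 : ℝ) ≤ 2 / (m - 2) := (div_pos two_pos (by linarith)).le
  have hball : ENNReal.ofReal (ρ ^ (((m : ℝ) - 2) / 2)) ≤ ν (closedBall p t) :=
    hν.trans (measure_mono (closedBall_subset_closedBall ht.1.le))
  have hpow : ENNReal.ofReal ((2 * ρ) ^ ((2 : ℝ) - m)) ≤ ENNReal.ofReal (t ^ ((2 : ℝ) - m)) :=
    ENNReal.ofReal_le_ofReal (Real.rpow_le_rpow_of_nonpos (hρ.trans ht.1) ht.2 (by linarith))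
  calc ENNReal.ofReal (4 * ρ)⁻¹
      = (ENNReal.ofReal (ρ ^ (((m : ℝ) - 2) / 2)) * ENNReal.ofReal ((2 * ρ) ^ ((2 : ℝ) - m))) ^
          ((2 : ℝ) / (m - 2)) := by
        rw [← ENNReal.ofReal_mul (by positivity), ENNReal.ofReal_rpow_of_nonneg (by positivity) hexp,
          rpow_mul_rpow_two_sub_rpow_eq hm' hρ]
    _ ≤ _ := ENNReal.rpow_le_rpow (mul_le_mul' hball hpow) hexp

lemma quarter_le_setLIntegral_wolff_integrand (hm : 2 < m) {ρ : ℝ} (hρ : 0 < ρ)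
    (hν : ENNReal.ofReal (ρ ^ (((m : ℝ) - 2) / 2)) ≤ ν (closedBall p ρ)) :
    ENNReal.ofReal 4⁻¹ ≤ ∫⁻ t in Ioc ρ (2 * ρ),
      (ν (closedBall p t) * ENNReal.ofReal (t ^ ((2 : ℝ) - m))) ^ ((2 : ℝ) / (m - 2)) :=
  calc ENNReal.ofReal 4⁻¹ = ∫⁻ _ in Ioc ρ (2 * ρ), ENNReal.ofReal (4 * ρ)⁻¹ := by
        rw [setLIntegral_const, Real.volume_Ioc, ← ENNReal.ofReal_mul (by positivity)]
        congr 1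
        field_simp
        ring
    _ ≤ _ := lintegral_mono_ae <| ae_restrict_of_forall_mem measurableSet_Ioc fun _ ht =>
        inv_four_mul_le_wolff_integrand hm hρ ht hν

theorem wolffPotential_eq_top_of_frequently_le_measure_closedBall (hm : 2 < m)
    (h : ∃ᶠ ρ in 𝓝[>] 0, ENNReal.ofReal (ρ ^ (((m : ℝ) - 2) / 2)) ≤ ν (closedBall p ρ)) :
    wolffPotential m ν p = ⊤ := by
  unfold wolffPotential
  refine setLIntegral_Ioc_zero_eq_top (ε := ENNReal.ofReal 4⁻¹) (by norm_num)
    (fun a ha => ?_) one_pos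
  obtain ⟨ρ, hball, hρ, hρa⟩ := (h.and_eventually (Ioo_mem_nhdsGT (half_pos ha))).exists
  exact ⟨ρ, ⟨hρ, by linarith⟩, (quarter_le_setLIntegral_wolff_integrand hm hρ hball).trans
    (lintegral_mono_set (Ioc_subset_Ioc_right (by linarith)))⟩

end Wolff

theorem atomic_measure_finite_and_wolffPotential_eq_top_general
    {X : Type*} [MetricSpace X] [MeasurableSpace X]
    (m : ℕ) (s : ℝ) (hs0 : 0 < s) (hs : s < ((m : ℝ) - 2) / 2)
    (K : Set X) (x : ℕ → ℕ → X) (r : ℕ → ℕ → ℝ)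
    (hrpos : ∀ l, 1 ≤ l → ∀ j, 0 < r l j)
    (hrle : ∀ l, 1 ≤ l → ∀ j, r l j ≤ (2 : ℝ) ^ (-(l : ℝ)))
    (hcover : ∀ l, 1 ≤ l → K ⊆ ⋃ j : ℕ, closedBall (x l j) (r l j))
    (hsum : ∀ l, 1 ≤ l → ∑' j : ℕ, ENNReal.ofReal ((r l j) ^ s) ≤ 1)
    (τ : ℝ) (hτ : τ = ((m : ℝ) - 2) / 2 - s)
    (ν : Measure X)
    (hν : ν = Measure.sum fun l : ℕ =>
      if 1 ≤ l then
        Measure.sum fun j : ℕ =>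
          ENNReal.ofReal ((r l j) ^ (((m : ℝ) - 2) / 2)) • Measure.dirac (x l j)
      else 0) :
    0 < τ ∧
    ν Set.univ ≤ ∑' l : ℕ, (if 1 ≤ l then ENNReal.ofReal ((2 : ℝ) ^ (-(l : ℝ) * τ)) else 0) ∧
    (∑' l : ℕ, (if 1 ≤ l then ENNReal.ofReal ((2 : ℝ) ^ (-(l : ℝ) * τ)) else 0)) < ⊤ ∧
    IsFiniteMeasure ν ∧
    ∀ p ∈ K, wolffPotential m ν p = ⊤ := by
  have hτ0 : 0 < τ := by rw [hτ]; linarith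
  have hm : 2 < m := by exact_mod_cast (show (2 : ℝ) < m by linarith)
  have hmass :
      ν univ ≤ ∑' l : ℕ, (if 1 ≤ l then ENNReal.ofReal ((2 : ℝ) ^ (-(l : ℝ) * τ)) else 0) := by
    rw [hν, Measure.sum_apply _ MeasurableSet.univ]
    refine ENNReal.tsum_le_tsum fun l => ?_
    split_ifs with hl
    · rw [sum_smul_dirac_apply_univ, show ((m : ℝ) - 2) / 2 = τ + s by rw [hτ]; ring,
        Real.rpow_mul zero_le_two]
      exact tsum_ofReal_rpow_add_le (hrpos l hl) (hrle l hl) hτ0.le (hsum l hl)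
    · simp
  have hgeom : ∑' l : ℕ, (if 1 ≤ l then ENNReal.ofReal ((2 : ℝ) ^ (-(l : ℝ) * τ)) else 0) < ⊤ :=
    (ENNReal.tsum_le_tsum fun l => by split_ifs <;> simp).trans_lt
      (tsum_ofReal_two_rpow_neg_mul_lt_top hτ0)
  refine ⟨hτ0, hmass, hgeom, ⟨hmass.trans_lt hgeom⟩, fun p hp => ?_⟩
  refine wolffPotential_eq_top_of_frequently_le_measure_closedBall hm ?_
  refine (nhdsGT_basis 0).frequently_iff.2 fun a ha => ?_
  obtain ⟨l, hl, hla⟩ := exists_two_rpow_neg_lt ha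
  obtain ⟨j, hj⟩ := mem_iUnion.1 (hcover l hl hp)
  refine ⟨r l j, ⟨hrpos l hl j, (hrle l hl j).trans_lt hla⟩, ?_⟩
  have hlevel := Measure.le_sum (fun l : ℕ => if 1 ≤ l then Measure.sum fun j : ℕ =>
    ENNReal.ofReal ((r l j) ^ (((m : ℝ) - 2) / 2)) • Measure.dirac (x l j) else 0) l
  rw [if_pos hl] at hlevel
  exact (le_sum_smul_dirac_apply _ _ (mem_closedBall_comm.1 hj)).trans (hν ▸ hlevel _)

/-- Given, for every `l ≥ 1`, a countable cover of `K` by balls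
`B_{r_{l,j}}(x_{l,j})` with centers in `K`, radii `0 < r_{l,j} ≤ 2^{-l}` and
`Σ_j r_{l,j}^s ≤ 1` (where `0 < s < (m-2)/2`), the atomic measure
`ν = Σ_{l ≥ 1} Σ_j r_{l,j}^{(m-2)/2} δ_{x_{l,j}}` is finite, with total mass at most
`Σ_{l ≥ 1} 2^{-lτ} < ∞` where `τ = (m-2)/2 - s > 0`, and its Wolff potential diverges
at every point of `K`. -/
theorem atomic_measure_finite_and_wolffPotential_eq_top
    {X : Type*} [MetricSpace X] [MeasurableSpace X] [BorelSpace X]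
    (m : ℕ) (hm : 3 ≤ m) (s : ℝ) (hs0 : 0 < s) (hs : s < ((m : ℝ) - 2) / 2)
    (K : Set X) (x : ℕ → ℕ → X) (r : ℕ → ℕ → ℝ)
    (hxK : ∀ l, 1 ≤ l → ∀ j, x l j ∈ K)
    (hrpos : ∀ l, 1 ≤ l → ∀ j, 0 < r l j)
    (hrle : ∀ l, 1 ≤ l → ∀ j, r l j ≤ (2 : ℝ) ^ (-(l : ℝ)))
    (hcover : ∀ l, 1 ≤ l → K ⊆ ⋃ j : ℕ, closedBall (x l j) (r l j))
    (hsum : ∀ l, 1 ≤ l → ∑' j : ℕ, ENNReal.ofReal ((r l j) ^ s) ≤ 1)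
    (τ : ℝ) (hτ : τ = ((m : ℝ) - 2) / 2 - s)
    (ν : Measure X)
    (hν : ν = Measure.sum fun l : ℕ =>
      if 1 ≤ l then
        Measure.sum fun j : ℕ =>
          ENNReal.ofReal ((r l j) ^ (((m : ℝ) - 2) / 2)) • Measure.dirac (x l j)
      else 0) :
    0 < τ ∧
    ν Set.univ ≤ ∑' l : ℕ, (if 1 ≤ l then ENNReal.ofReal ((2 : ℝ) ^ (-(l : ℝ) * τ)) else 0) ∧
    (∑' l : ℕ, (if 1 ≤ l then ENNReal.ofReal ((2 : ℝ) ^ (-(l : ℝ) * τ)) else 0)) < ⊤ ∧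
    IsFiniteMeasure ν ∧
    ∀ p ∈ K, wolffPotential m ν p = ⊤ :=
  atomic_measure_finite_and_wolffPotential_eq_top_general m s hs0 hs K x r hrpos hrle hcover hsum τ
    hτ ν hν
end
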